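/- arXiv:1512.02778 — 6 statements merged into one kernel-verified Lean document; each statement's English description precedes it below -/
import Mathlib

section
/- Let R be a filtered ring with increasing filtration F such that the associated graded ring Gr(R) is commutative, and let M be a filtered R-module with two good filtrations F and G. Then the radicals of the annihilator ideals Ann_{Gr(R)}(Gr_F M) and Ann_{Gr(R)}(Gr_G M) in Gr(R) coincide. -/
section

variable {R M : Type*} [Ring R] [AddCommGroup M] [Module R M]

/-- `FR` is an exhaustive increasing `ℤ`-filtration of the ring `R`. -/
def IsRingFiltration' (FR : ℤ → AddSubgroup R) : Prop :=
  Monotone FR ∧ (1 : R) ∈ FR 0 ∧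
    (∀ i j : ℤ, ∀ a ∈ FR i, ∀ b ∈ FR j, a * b ∈ FR (i + j)) ∧
    (∀ r : R, ∃ i, r ∈ FR i)

/-- The associated graded ring of the filtration `FR` is commutative: commutators drop
filtration degree. -/
def HasCommGraded (FR : ℤ → AddSubgroup R) : Prop :=
  ∀ i j : ℤ, ∀ a ∈ FR i, ∀ b ∈ FR j, a * b - b * a ∈ FR (i + j - 1)

/-- `F` is a compatible, exhaustive, increasing, discrete-below filtration of the
`R`-module `M`, by submodules finitely generated over `FR 0`. -/
def IsModuleFiltration' (FR : ℤ → AddSubgroup R) (F : ℤ → AddSubgroup M) : Prop :=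
  Monotone F ∧ (∀ m : M, ∃ j, m ∈ F j) ∧ (∃ j₀, ∀ j ≤ j₀, F j = ⊥) ∧
    (∀ i j : ℤ, ∀ r ∈ FR i, ∀ m ∈ F j, r • m ∈ F (i + j)) ∧
    (∀ j : ℤ, ∃ S : Finset M, (↑S : Set M) ⊆ F j ∧
      F j = AddSubgroup.closure {y | ∃ t ∈ S, ∃ r ∈ FR 0, y = r • t})

/-- `F` is a good filtration: the associated graded module `Gr_F M` is finitely generated
over `Gr(R)`; equivalently, `F` is generated by finitely many homogeneous symbols. -/
def IsGoodFiltration (FR : ℤ → AddSubgroup R) (F : ℤ → AddSubgroup M) : Prop :=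
  ∃ T : Finset (ℤ × M), (∀ p ∈ T, p.2 ∈ F p.1) ∧
    ∀ j : ℤ, F j = AddSubgroup.closure {y | ∃ p ∈ T, ∃ r ∈ FR (j - p.1), y = r • p.2}

/-- The symbol in `Gr^k(R)` of `r ∈ F^k R` annihilates `Gr_F M`:
`r • F^j M ⊆ F^{j+k-1} M` for all `j`. -/
def SymbolAnnihilates (F : ℤ → AddSubgroup M) (r : R) (k : ℤ) : Prop :=
  ∀ j : ℤ, ∀ m ∈ F j, r • m ∈ F (j + k - 1)

end

/-!
Two good filtrations of the same module are equivalent: each is contained in the other shifted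
by a constant `c`, since each is generated by finitely many elements, all of which lie in some
step of the other. If the symbol of `a` in degree `e` annihilates `Gr_F M`, then `a` maps
`F^j M` into `F^{j+e-1} M`, so `a^(2c+1)` maps it into `F^{j+e(2c+1)-(2c+1)} M`; this loss of
`2c+1` degrees absorbs the two shifts `G ⊆ F(· + c)` and `F ⊆ G(· + c)`, so the symbol of
`a^(2c+1)` annihilates `Gr_G M`.
-/

section

variable {R M : Type*} [Ring R] [AddCommGroup M] [Module R M]

lemma IsGoodFiltration.exists_le_shift {FR : ℤ → AddSubgroup R} {F G : ℤ → AddSubgroup M}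
    (hGgood : IsGoodFiltration FR G) (hFmono : Monotone F) (hFexh : ∀ m : M, ∃ j, m ∈ F j)
    (hFcompat : ∀ i j : ℤ, ∀ r ∈ FR i, ∀ m ∈ F j, r • m ∈ F (i + j)) :
    ∃ c : ℕ, ∀ j, G j ≤ F (j + c) := by
  obtain ⟨T, -, hT⟩ := hGgood
  choose f hf using hFexh
  let shift : ℤ × M → ℕ := fun p => (f p.2 - p.1).toNat
  refine ⟨T.sup shift, fun j => ?_⟩
  rw [hT j, AddSubgroup.closure_le]
  rintro y ⟨p, hp, r, hr, rfl⟩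
  have hle : (shift p : ℤ) ≤ (T.sup shift : ℕ) := by exact_mod_cast Finset.le_sup hp
  refine hFmono ?_ (hFcompat _ _ r hr _ (hf p.2))
  have : f p.2 - p.1 ≤ (shift p : ℤ) := Int.self_le_toNat _
  omega

lemma IsGoodFiltration.exists_shift_le_and_le {FR : ℤ → AddSubgroup R}
    {F G : ℤ → AddSubgroup M} (hF : IsModuleFiltration' FR F) (hG : IsModuleFiltration' FR G)
    (hFgood : IsGoodFiltration FR F) (hGgood : IsGoodFiltration FR G) :
    ∃ c : ℕ, ∀ j, F j ≤ G (j + c) ∧ G j ≤ F (j + c) := by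
  obtain ⟨c₁, hc₁⟩ := hFgood.exists_le_shift hG.1 hG.2.1 hG.2.2.2.1
  obtain ⟨c₂, hc₂⟩ := hGgood.exists_le_shift hF.1 hF.2.1 hF.2.2.2.1
  refine ⟨max c₁ c₂, fun j => ⟨(hc₁ j).trans (hG.1 ?_), (hc₂ j).trans (hF.1 ?_)⟩⟩ <;> omega

lemma pow_smul_mem_of_smul_mem {F : ℤ → AddSubgroup M} {a : R} {d : ℤ}
    (h : ∀ j : ℤ, ∀ m ∈ F j, a • m ∈ F (j + d)) (t : ℕ) :
    ∀ j : ℤ, ∀ m ∈ F j, a ^ t • m ∈ F (j + d * t) := by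
  induction t with
  | zero => simp
  | succ t ih =>
    intro j m hm
    rw [pow_succ, mul_smul]
    convert ih (j + d) (a • m) (h j m hm) using 2
    push_cast
    ring

lemma SymbolAnnihilates.pow_of_le_shift {F G : ℤ → AddSubgroup M} (hGmono : Monotone G)
    {c : ℕ} (hGF : ∀ j, G j ≤ F (j + c)) (hFG : ∀ j, F j ≤ G (j + c))
    {a : R} {e : ℤ} (h : SymbolAnnihilates F a e) :
    SymbolAnnihilates G (a ^ (2 * c + 1)) (e * (2 * c + 1 : ℕ)) := by
  intro j m hm
  have hstep : ∀ j : ℤ, ∀ m ∈ F j, a • m ∈ F (j + (e - 1)) := fun j m hm => by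
    simpa only [add_sub_assoc] using h j m hm
  refine hGmono (le_of_eq ?_) (hFG _ (pow_smul_mem_of_smul_mem hstep _ _ m (hGF j hm)))
  push_cast
  ring

lemma exists_pow_symbolAnnihilates_of_le_shift {F G : ℤ → AddSubgroup M}
    (hGmono : Monotone G) {c : ℕ} (hGF : ∀ j, G j ≤ F (j + c)) (hFG : ∀ j, F j ≤ G (j + c))
    {r : R} {k : ℤ} (h : ∃ s : ℕ, 1 ≤ s ∧ SymbolAnnihilates F (r ^ s) (k * s)) :
    ∃ s : ℕ, 1 ≤ s ∧ SymbolAnnihilates G (r ^ s) (k * s) := by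
  obtain ⟨s, hs, hann⟩ := h
  refine ⟨s * (2 * c + 1), Nat.one_le_iff_ne_zero.2 (by positivity), ?_⟩
  rw [pow_mul, Nat.cast_mul, ← mul_assoc]
  exact hann.pow_of_le_shift hGmono hGF hFG

end

theorem radical_ann_independent_of_good_filtration_general
    {R M : Type*} [Ring R] [AddCommGroup M] [Module R M]
    (FR : ℤ → AddSubgroup R)
    (F G : ℤ → AddSubgroup M)
    (hF : IsModuleFiltration' FR F) (hG : IsModuleFiltration' FR G)
    (hFgood : IsGoodFiltration FR F) (hGgood : IsGoodFiltration FR G)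
    (k : ℤ) (r : R) :
    (∃ s : ℕ, 1 ≤ s ∧ SymbolAnnihilates F (r ^ s) (k * s)) ↔
      (∃ s : ℕ, 1 ≤ s ∧ SymbolAnnihilates G (r ^ s) (k * s)) := by
  obtain ⟨c, hc⟩ := IsGoodFiltration.exists_shift_le_and_le hF hG hFgood hGgood
  exact ⟨exists_pow_symbolAnnihilates_of_le_shift hG.1 (fun j => (hc j).2) (fun j => (hc j).1),
    exists_pow_symbolAnnihilates_of_le_shift hF.1 (fun j => (hc j).1) (fun j => (hc j).2)⟩

/-- Let `R` be a filtered ring with commutative associated graded ring, and let `M` be a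
filtered `R`-module with two good filtrations `F` and `G`.  Then the radicals of the
annihilator ideals `Ann_{Gr R}(Gr_F M)` and `Ann_{Gr R}(Gr_G M)` coincide: a homogeneous
element of degree `k`, i.e. the symbol of some `r ∈ F^k R`, lies in the radical of the one
annihilator (some power of the symbol, which is the symbol of `r^s` in degree `k*s`,
annihilates the graded module) if and only if it lies in the radical of the other. -/
theorem radical_ann_independent_of_good_filtration
    {R M : Type*} [Ring R] [AddCommGroup M] [Module R M]
    (FR : ℤ → AddSubgroup R) (hFR : IsRingFiltration' FR) (hcomm : HasCommGraded FR)
    (F G : ℤ → AddSubgroup M)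
    (hF : IsModuleFiltration' FR F) (hG : IsModuleFiltration' FR G)
    (hFgood : IsGoodFiltration FR F) (hGgood : IsGoodFiltration FR G)
    (k : ℤ) (r : R) (hr : r ∈ FR k) :
    (∃ s : ℕ, 1 ≤ s ∧ SymbolAnnihilates F (r ^ s) (k * s)) ↔
      (∃ s : ℕ, 1 ≤ s ∧ SymbolAnnihilates G (r ^ s) (k * s)) :=
  radical_ann_independent_of_good_filtration_general FR F G hF hG hFgood hGgood k r
end

section
/- Let R be a filtered ring with commutative associated graded ring, and let M be an R-module with a compatible filtration F by finitely generated submodules of the degree-0 part. Then F is a good filtration if and only if there exists j₀ such that F^i R · F^j M = F^{i+j} M for all j ≥ j₀ and all i ≥ 0. -/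
open AddSubgroup

section

variable {R M : Type*} [Ring R] [AddCommGroup M] [Module R M]

/-- `FR` is an exhaustive increasing `ℤ`-filtration of the ring `R`, zero in negative
degrees, whose associated graded ring is commutative and generated in degree `1` over
degree `0`. -/
def IsDiffOpFiltration (FR : ℤ → AddSubgroup R) : Prop :=
  Monotone FR ∧ (1 : R) ∈ FR 0 ∧
    (∀ i j : ℤ, ∀ a ∈ FR i, ∀ b ∈ FR j, a * b ∈ FR (i + j)) ∧
    (∀ r : R, ∃ i, r ∈ FR i) ∧
    (∀ i : ℤ, i < 0 → FR i = ⊥) ∧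
    (∀ i j : ℤ, ∀ a ∈ FR i, ∀ b ∈ FR j, a * b - b * a ∈ FR (i + j - 1)) ∧
    (∀ i : ℤ, 0 ≤ i →
      (FR (i + 1) : Set R) ⊆
        ↑(AddSubgroup.closure ({y | ∃ b ∈ FR 1, ∃ c ∈ FR i, y = b * c} ∪ ↑(FR i))))

/-- `F` is a compatible, exhaustive, increasing, discrete-below filtration of the
`R`-module `M` by submodules finitely generated over `F^0 R`. -/
def IsCompatibleFiltration (FR : ℤ → AddSubgroup R) (F : ℤ → AddSubgroup M) : Prop :=
  Monotone F ∧ (∀ m : M, ∃ j, m ∈ F j) ∧ (∃ j₀, ∀ j ≤ j₀, F j = ⊥) ∧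
    (∀ i j : ℤ, ∀ r ∈ FR i, ∀ m ∈ F j, r • m ∈ F (i + j)) ∧
    (∀ j : ℤ, ∃ S : Finset M, (↑S : Set M) ⊆ F j ∧
      F j = AddSubgroup.closure {y | ∃ t ∈ S, ∃ r ∈ FR 0, y = r • t})

end

/-!
If `Gr_F M` is generated by finitely many symbols of degree at most `j₀`, then, because `Gr R` is
generated in degree one, `F^{i+d} R = F^i R · F^d R` for `i, d ≥ 0`, so every generator term of
`F^{i+j} M` with `j ≥ j₀` already lies in `F^i R · F^j M`. Conversely, once
`F^{i+j₀} M = F^i R · F^{j₀} M`, the finitely many `F^0 R`-generators of `F^j M` for `j` between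
the vanishing degree and `j₀` generate the filtration.
-/

section SmulSpan

variable {R M : Type*} [Ring R] [AddCommGroup M] [Module R M]

def smulSpan (A : AddSubgroup R) (N : AddSubgroup M) : AddSubgroup M :=
  closure {y | ∃ r ∈ A, ∃ m ∈ N, y = r • m}

variable {A B C : AddSubgroup R} {N P : AddSubgroup M}

theorem smul_mem_smulSpan {r : R} {m : M} (hr : r ∈ A) (hm : m ∈ N) : r • m ∈ smulSpan A N :=
  subset_closure ⟨r, hr, m, hm, rfl⟩

theorem smulSpan_le_iff : smulSpan A N ≤ P ↔ ∀ r ∈ A, ∀ m ∈ N, r • m ∈ P := by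
  refine (closure_le P).trans ⟨fun h r hr m hm => h ⟨r, hr, m, hm, rfl⟩, ?_⟩
  rintro h _ ⟨r, hr, m, hm, rfl⟩
  exact h r hr m hm

theorem smulSpan_mono_left (h : A ≤ B) : smulSpan A N ≤ smulSpan B N :=
  smulSpan_le_iff.2 fun _ hr _ hm => smul_mem_smulSpan (h hr) hm

theorem smulSpan_mono_right (h : N ≤ P) : smulSpan A N ≤ smulSpan A P :=
  smulSpan_le_iff.2 fun _ hr _ hm => smul_mem_smulSpan hr (h hm)

theorem smul_mem_smulSpan_of_mul_mem {a : R} {x : M} (h : ∀ b ∈ B, a * b ∈ C)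
    (hx : x ∈ smulSpan B N) : a • x ∈ smulSpan C N := by
  have : smulSpan B N ≤ (smulSpan C N).comap (DistribSMul.toAddMonoidHom M a) :=
    smulSpan_le_iff.2 fun b hb m hm => by
      simpa [mul_smul] using smul_mem_smulSpan (h b hb) hm
  exact this hx

theorem smul_mem_smulSpan_of_smul_mem {x : R} {m : M} (h : ∀ c ∈ B, c • m ∈ N)
    (hx : x ∈ smulSpan A B) : x • m ∈ smulSpan A N := by
  have : smulSpan A B ≤ (smulSpan A N).comap ((smulAddHom R M).flip m) :=
    smulSpan_le_iff.2 fun r hr c hc => by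
      simpa [mul_smul] using smul_mem_smulSpan hr (h c hc)
  exact this hx

end SmulSpan

section Filtration

variable {R M : Type*} [Ring R] [AddCommGroup M] [Module R M] {FR : ℤ → AddSubgroup R}

theorem filtration_add_le_smulSpan (hmono : Monotone FR) (hone : (1 : R) ∈ FR 0)
    (hmul : ∀ i j : ℤ, ∀ a ∈ FR i, ∀ b ∈ FR j, a * b ∈ FR (i + j))
    (hgen : ∀ i : ℤ, 0 ≤ i →
      (FR (i + 1) : Set R) ⊆
        ↑(AddSubgroup.closure ({y | ∃ b ∈ FR 1, ∃ c ∈ FR i, y = b * c} ∪ ↑(FR i))))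
    {i d : ℤ} (hi : 0 ≤ i) (hd : 0 ≤ d) : FR (i + d) ≤ smulSpan (FR i) (FR d) := by
  induction i, hi using Int.leInduction with
  | base => exact fun x hx => by simpa using smul_mem_smulSpan hone (by simpa using hx)
  | succ i hi ih =>
    rw [add_right_comm]
    refine le_trans (hgen (i + d) (by omega)) ((closure_le _).2 ?_)
    rintro _ (⟨b, hb, c, hc, rfl⟩ | hx)
    · refine smul_mem_smulSpan_of_mul_mem (fun b' hb' => ?_) (ih hc)
      simpa [add_comm] using hmul 1 i b hb b' hb'
    · exact smulSpan_mono_left (hmono (by omega)) (ih hx)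

/-- The filtration `j ↦ Σ_{p ∈ T} F^{j - p.1} R • p.2` generated by the elements `p.2`, placed in
degree `p.1`. -/
def homogeneousSpan (FR : ℤ → AddSubgroup R) (T : Set (ℤ × M)) (j : ℤ) : AddSubgroup M :=
  closure {y | ∃ p ∈ T, ∃ r ∈ FR (j - p.1), y = r • p.2}

variable {T : Set (ℤ × M)}

theorem smul_mem_homogeneousSpan {t : M} {j : ℤ} {r : R} (ht : (j, t) ∈ T) (hr : r ∈ FR 0) :
    r • t ∈ homogeneousSpan FR T j :=
  subset_closure ⟨(j, t), ht, r, by simpa using hr, rfl⟩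

theorem homogeneousSpan_le (F : ℤ → AddSubgroup M)
    (hsmul : ∀ i j : ℤ, ∀ r ∈ FR i, ∀ m ∈ F j, r • m ∈ F (i + j))
    (hT : ∀ p ∈ T, p.2 ∈ F p.1) (j : ℤ) : homogeneousSpan FR T j ≤ F j := by
  refine (closure_le _).2 ?_
  rintro _ ⟨p, hp, r, hr, rfl⟩
  simpa using hsmul _ _ r hr p.2 (hT p hp)

theorem smulSpan_homogeneousSpan_le
    (hmul : ∀ i j : ℤ, ∀ a ∈ FR i, ∀ b ∈ FR j, a * b ∈ FR (i + j)) (i j : ℤ) :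
    smulSpan (FR i) (homogeneousSpan FR T j) ≤ homogeneousSpan FR T (i + j) := by
  refine smulSpan_le_iff.2 fun a ha x hx => ?_
  have : homogeneousSpan FR T j ≤
      (homogeneousSpan FR T (i + j)).comap (DistribSMul.toAddMonoidHom M a) := by
    refine (closure_le _).2 ?_
    rintro _ ⟨p, hp, r, hr, rfl⟩
    rw [SetLike.mem_coe, mem_comap, DistribSMul.toAddMonoidHom_apply, ← mul_smul]
    refine subset_closure ⟨p, hp, a * r, ?_, rfl⟩
    simpa [add_sub_assoc] using hmul i _ a ha r hr
  exact this hx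

theorem homogeneousSpan_add_le_smulSpan (F : ℤ → AddSubgroup M)
    (hsmul : ∀ i j : ℤ, ∀ r ∈ FR i, ∀ m ∈ F j, r • m ∈ F (i + j))
    (hadd : ∀ i d : ℤ, 0 ≤ i → 0 ≤ d → FR (i + d) ≤ smulSpan (FR i) (FR d))
    (hT : ∀ p ∈ T, p.2 ∈ F p.1) {i j : ℤ} (hi : 0 ≤ i) (hdeg : ∀ p ∈ T, p.1 ≤ j) :
    homogeneousSpan FR T (i + j) ≤ smulSpan (FR i) (F j) := by
  refine (closure_le _).2 ?_
  rintro _ ⟨p, hp, r, hr, rfl⟩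
  have hr' := hadd i (j - p.1) hi (sub_nonneg.2 (hdeg p hp)) (by rwa [← add_sub_assoc])
  refine smul_mem_smulSpan_of_smul_mem (fun c hc => ?_) hr'
  simpa using hsmul _ _ c hc p.2 (hT p hp)

theorem le_homogeneousSpan_of_le_smulSpan
    (hmul : ∀ i j : ℤ, ∀ a ∈ FR i, ∀ b ∈ FR j, a * b ∈ FR (i + j))
    {F : ℤ → AddSubgroup M} {j₀ : ℤ} (hlow : ∀ j ≤ j₀, F j ≤ homogeneousSpan FR T j)
    (hhigh : ∀ i : ℤ, 0 ≤ i → F (i + j₀) ≤ smulSpan (FR i) (F j₀)) (j : ℤ) :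
    F j ≤ homogeneousSpan FR T j := by
  rcases le_or_gt j j₀ with hj | hj
  · exact hlow j hj
  obtain ⟨i, hi, rfl⟩ : ∃ i, 0 ≤ i ∧ j = i + j₀ := ⟨j - j₀, by omega, by omega⟩
  calc F (i + j₀) ≤ smulSpan (FR i) (F j₀) := hhigh i hi
    _ ≤ smulSpan (FR i) (homogeneousSpan FR T j₀) := smulSpan_mono_right (hlow j₀ le_rfl)
    _ ≤ homogeneousSpan FR T (i + j₀) := smulSpan_homogeneousSpan_le hmul i j₀

theorem exists_finset_le_homogeneousSpan {F : ℤ → AddSubgroup M} {j₁ : ℤ}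
    (hbot : ∀ j ≤ j₁, F j = ⊥)
    (hfg : ∀ j : ℤ, ∃ S : Finset M, (↑S : Set M) ⊆ F j ∧
      F j = AddSubgroup.closure {y | ∃ t ∈ S, ∃ r ∈ FR 0, y = r • t}) (j₀ : ℤ) :
    ∃ T : Finset (ℤ × M), (∀ p ∈ T, p.2 ∈ F p.1) ∧
      ∀ j ≤ j₀, F j ≤ homogeneousSpan FR (↑T) j := by
  choose S hSF hS using hfg
  classical
  refine ⟨(Finset.Icc j₁ j₀).biUnion fun j => (S j).image (Prod.mk j), ?_, fun j hj => ?_⟩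
  · simp only [Finset.mem_biUnion, Finset.mem_image]
    rintro _ ⟨j, -, t, ht, rfl⟩
    exact hSF j ht
  rcases le_or_gt j j₁ with hj₁ | hj₁
  · exact (hbot j hj₁).trans_le bot_le
  rw [hS j, closure_le]
  rintro _ ⟨t, ht, r, hr, rfl⟩
  refine smul_mem_homogeneousSpan ?_ hr
  exact Finset.mem_biUnion.2 ⟨j, Finset.mem_Icc.2 ⟨hj₁.le, hj⟩, Finset.mem_image_of_mem _ ht⟩

end Filtration

/-- Let `R` be a filtered ring with commutative associated graded ring generated in degree
one, and `M` an `R`-module with a compatible filtration `F` by finitely generated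
submodules.  Then `F` is a good filtration (the associated graded module `Gr_F M` is
finitely generated over `Gr R`, i.e. `F` is generated by finitely many homogeneous
symbols) if and only if there exists `j₀` such that `F^i R • F^j M = F^{i+j} M` for all
`j ≥ j₀` and all `i ≥ 0`. -/
theorem good_filtration_iff_eventually_generated
    {R M : Type*} [Ring R] [AddCommGroup M] [Module R M]
    (FR : ℤ → AddSubgroup R) (hFR : IsDiffOpFiltration FR)
    (F : ℤ → AddSubgroup M) (hF : IsCompatibleFiltration FR F) :
    (∃ T : Finset (ℤ × M), (∀ p ∈ T, p.2 ∈ F p.1) ∧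
        ∀ j : ℤ, F j = AddSubgroup.closure {y | ∃ p ∈ T, ∃ r ∈ FR (j - p.1), y = r • p.2}) ↔
      (∃ j₀ : ℤ, ∀ j ≥ j₀, ∀ i : ℤ, 0 ≤ i →
        F (i + j) = AddSubgroup.closure {y | ∃ r ∈ FR i, ∃ m ∈ F j, y = r • m}) := by
  obtain ⟨hmono, hone, hmul, -, -, -, hgen⟩ := hFR
  obtain ⟨-, -, ⟨j₁, hbot⟩, hsmul, hfg⟩ := hF
  constructor
  · rintro ⟨T, hT, hspan⟩
    obtain ⟨j₀, hj₀⟩ := Finset.exists_le (T.image Prod.fst)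
    refine ⟨j₀, fun j hj i hi => (smulSpan_le_iff.2 (hsmul i j)).antisymm' ?_⟩
    exact (hspan (i + j)).trans_le <| homogeneousSpan_add_le_smulSpan F hsmul
      (fun i d hi hd => filtration_add_le_smulSpan hmono hone hmul hgen hi hd) hT hi
      fun p hp => (hj₀ _ (Finset.mem_image_of_mem _ hp)).trans hj
  · rintro ⟨j₀, hj₀⟩
    obtain ⟨T, hT, hlow⟩ := exists_finset_le_homogeneousSpan hbot hfg j₀
    refine ⟨T, hT, fun j => le_antisymm ?_ (homogeneousSpan_le F hsmul hT j)⟩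
    exact le_homogeneousSpan_of_le_smulSpan hmul hlow (fun i hi => (hj₀ j₀ le_rfl i hi).le) j
end

section
/- The ideal (x_1 ξ_1, …, x_r ξ_r, ξ_{r+1}, …, ξ_n) in the polynomial ring K[x_1,…,x_n,ξ_1,…,ξ_n] over a field K is a radical ideal, and its zero set is the union of the conormal varieties of the coordinate subspaces {x_{i_1} = ⋯ = x_{i_k} = 0} for subsets {i_1,…,i_k} ⊆ {1,…,r}. -/
/-!
The conormal ideals `(x_i, i ∈ S; ξ_j, j ∉ S)`, `S ⊆ {1, …, r}`, intersect to the given ideal: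
a monomial lies in all of them exactly when it is divisible by some `x_i ξ_i` with `i ≤ r` or
some `ξ_j` with `j > r` (take `S` to be the `i ≤ r` with `x_i` absent from the monomial).
Each conormal ideal is the kernel of the substitution killing its variables, a map into a reduced
ring, hence radical, and so is the intersection. The zero set is read off from the generators.
-/

open MvPolynomial

namespace MvPolynomial

variable {σ R : Type*} [CommRing R]

theorem sub_aeval_indicator_compl_X_mem_span (s : Set σ) (f : MvPolynomial σ R) :
    f - aeval (sᶜ.indicator X) f ∈ Ideal.span (X '' s) := by
  set J := Ideal.span (X '' s : Set (MvPolynomial σ R))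
  have hmk :
      (Ideal.Quotient.mkₐ R J).comp (aeval (sᶜ.indicator X)) = Ideal.Quotient.mkₐ R J := by
    refine algHom_ext fun i => ?_
    by_cases hi : i ∈ s
    · have hXi : X i ∈ J := Ideal.subset_span ⟨i, hi, rfl⟩
      simpa [hi] using (Ideal.Quotient.eq_zero_iff_mem.mpr hXi).symm
    · simp [hi]
  exact Ideal.Quotient.eq.mp (by simpa using (AlgHom.congr_fun hmk f).symm)

theorem ker_aeval_indicator_compl_X (s : Set σ) :
    RingHom.ker (aeval (sᶜ.indicator X) : MvPolynomial σ R →ₐ[R] MvPolynomial σ R) =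
      Ideal.span (X '' s) := by
  refine le_antisymm (fun f hf => ?_) (Ideal.span_le.mpr ?_)
  · simpa only [RingHom.mem_ker.mp hf, sub_zero] using sub_aeval_indicator_compl_X_mem_span s f
  · rintro _ ⟨i, hi, rfl⟩
    simp [hi]

theorem isRadical_span_X_image [IsReduced R] (s : Set σ) :
    (Ideal.span (X '' s : Set (MvPolynomial σ R))).IsRadical := by
  rw [← ker_aeval_indicator_compl_X]
  rintro f ⟨k, hk⟩
  exact IsNilpotent.eq_zero ⟨k, by rwa [RingHom.mem_ker, map_pow] at hk⟩

section NormalCrossing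

open Sum

variable {ι : Type*}

variable (R) in
/-- With `x_i = X (inl i)` and `ξ_i = X (inr i)`; the paper's `{1, …, r}` is `A`. -/
noncomputable def normalCrossingIdeal (A : Set ι) : Ideal (MvPolynomial (ι ⊕ ι) R) :=
  Ideal.span ({p | ∃ i ∈ A, p = X (inl i) * X (inr i)} ∪ {p | ∃ i ∉ A, p = X (inr i)})

variable (R) in
noncomputable def conormalIdeal (S : Set ι) : Ideal (MvPolynomial (ι ⊕ ι) R) :=
  Ideal.span (X '' (inl '' S ∪ inr '' Sᶜ))

theorem normalCrossingIdeal_eq_span_monomial (A : Set ι) :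
    normalCrossingIdeal R A = Ideal.span ((fun m => monomial m 1) ''
      ((fun i => Finsupp.single (inl i) 1 + Finsupp.single (inr i) 1) '' A ∪
        (fun i => Finsupp.single (inr i) 1) '' Aᶜ)) := by
  rw [normalCrossingIdeal, Set.image_union, Set.image_image, Set.image_image]
  congr 2
  · ext p
    simp [X, monomial_mul, eq_comm]
  · ext p
    simp [X, eq_comm]

theorem normalCrossingIdeal_le_conormalIdeal {A S : Set ι} (hS : S ⊆ A) :
    normalCrossingIdeal R A ≤ conormalIdeal R S := by
  refine Ideal.span_le.mpr ?_
  rintro _ (⟨i, -, rfl⟩ | ⟨i, hi, rfl⟩)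
  · by_cases hiS : i ∈ S
    · exact Ideal.mul_mem_right _ _ (Ideal.subset_span ⟨inl i, Or.inl ⟨i, hiS, rfl⟩, rfl⟩)
    · exact Ideal.mul_mem_left _ _ (Ideal.subset_span ⟨inr i, Or.inr ⟨i, hiS, rfl⟩, rfl⟩)
  · exact Ideal.subset_span ⟨inr i, Or.inr ⟨i, fun hiS => hi (hS hiS), rfl⟩, rfl⟩

theorem normalCrossingIdeal_eq_iInf_conormalIdeal (A : Set ι) :
    normalCrossingIdeal R A = ⨅ (S : Set ι) (_ : S ⊆ A), conormalIdeal R S := by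
  refine le_antisymm (le_iInf₂ fun S hS => normalCrossingIdeal_le_conormalIdeal hS) fun f hf => ?_
  rw [normalCrossingIdeal_eq_span_monomial, mem_ideal_span_monomial_image]
  intro m hm
  have hfS : f ∈ conormalIdeal R {i | i ∈ A ∧ m (inl i) = 0} :=
    Ideal.mem_iInf.mp (Ideal.mem_iInf.mp hf _) fun i hi => hi.1
  obtain ⟨_, ⟨i, hi, rfl⟩ | ⟨i, hi, rfl⟩, hmi⟩ := mem_ideal_span_X_image.mp hfS m hm
  · exact absurd hi.2 hmi
  · by_cases hiA : i ∈ A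
    · refine ⟨_, Or.inl ⟨i, hiA, rfl⟩, fun v => ?_⟩
      have hl : m (inl i) ≠ 0 := fun h => hi ⟨hiA, h⟩
      rcases v with j | j <;> by_cases hj : j = i <;>
        simp [hj, Nat.one_le_iff_ne_zero, hl, hmi]
    · exact ⟨_, Or.inr ⟨i, hiA, rfl⟩,
        Finsupp.single_le_iff.mpr (Nat.one_le_iff_ne_zero.mpr hmi)⟩

theorem isRadical_normalCrossingIdeal [IsReduced R] (A : Set ι) :
    (normalCrossingIdeal R A).IsRadical := by
  rw [normalCrossingIdeal_eq_iInf_conormalIdeal]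
  exact Ideal.isRadical_iInf _ fun S => Ideal.isRadical_iInf _ fun _ => isRadical_span_X_image _

theorem eval_eq_zero_of_mem_normalCrossingIdeal_iff [NoZeroDivisors R] (A : Set ι)
    (p : ι ⊕ ι → R) :
    (∀ f ∈ normalCrossingIdeal R A, eval p f = 0) ↔
      ∃ S ⊆ A, (∀ i ∈ S, p (inl i) = 0) ∧ ∀ j ∉ S, p (inr j) = 0 := by
  change normalCrossingIdeal R A ≤ RingHom.ker (eval p) ↔ _
  simp only [normalCrossingIdeal, Ideal.span_le, Set.union_subset_iff, Set.ofPred_subset,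
    SetLike.mem_coe, RingHom.mem_ker]
  constructor
  · rintro ⟨hpair, hout⟩
    refine ⟨{i | i ∈ A ∧ p (inl i) = 0}, fun i hi => hi.1, fun i hi => hi.2, fun j hj => ?_⟩
    by_cases hjA : j ∈ A
    · simpa using (mul_eq_zero.mp (by simpa using hpair _ ⟨j, hjA, rfl⟩)).resolve_left
        fun h => hj ⟨hjA, h⟩
    · simpa using hout _ ⟨j, hjA, rfl⟩
  · rintro ⟨S, hSA, hinl, hinr⟩
    refine ⟨?_, ?_⟩
    · rintro _ ⟨i, -, rfl⟩
      by_cases hiS : i ∈ S <;> simp [hinl, hinr, hiS]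
    · rintro _ ⟨i, hiA, rfl⟩
      simpa using hinr i fun hiS => hiA (hSA hiS)

end NormalCrossing

end MvPolynomial

theorem normal_crossing_conormal_ideal_radical_and_zero_set_general
    (K : Type*) [Field K] (n r : ℕ) :
    (Ideal.span
        ({p | ∃ i : Fin n, (i : ℕ) < r ∧ p = X (Sum.inl i) * X (Sum.inr i)} ∪
          {p | ∃ i : Fin n, r ≤ (i : ℕ) ∧ p = X (Sum.inr i)} :
          Set (MvPolynomial (Fin n ⊕ Fin n) K))).IsRadical ∧
    (∀ p : (Fin n ⊕ Fin n) → K,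
      (∀ f ∈ (Ideal.span
          ({q | ∃ i : Fin n, (i : ℕ) < r ∧ q = X (Sum.inl i) * X (Sum.inr i)} ∪
            {q | ∃ i : Fin n, r ≤ (i : ℕ) ∧ q = X (Sum.inr i)} :
            Set (MvPolynomial (Fin n ⊕ Fin n) K))), eval p f = 0) ↔
        ∃ S : Finset (Fin n), (∀ i ∈ S, (i : ℕ) < r) ∧
          (∀ i ∈ S, p (Sum.inl i) = 0) ∧ (∀ j : Fin n, j ∉ S → p (Sum.inr j) = 0)) := by
  set A : Set (Fin n) := {i | (i : ℕ) < r}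
  have hAc : ∀ i : Fin n, r ≤ (i : ℕ) ↔ i ∉ A := fun i => not_lt.symm
  simp_rw [hAc]
  refine ⟨isRadical_normalCrossingIdeal A,
    fun p => (eval_eq_zero_of_mem_normalCrossingIdeal_iff A p).trans ?_⟩
  constructor
  · rintro ⟨S, hSA, hinl, hinr⟩
    refine ⟨S.toFinite.toFinset, ?_⟩
    simp only [Set.Finite.mem_toFinset]
    exact ⟨hSA, hinl, hinr⟩
  · rintro ⟨S, hSA, hinl, hinr⟩
    exact ⟨S, hSA, hinl, hinr⟩

/-- The ideal `(x_1ξ_1, …, x_rξ_r, ξ_{r+1}, …, ξ_n)` in `K[x_1,…,x_n,ξ_1,…,ξ_n]`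
(with `x_i = X (inl i)`, `ξ_i = X (inr i)`) is a radical ideal, and its zero set is the
union, over subsets `S ⊆ {1,…,r}`, of the conormal varieties to the coordinate subspaces
`{x_i = 0, i ∈ S}`, i.e. the linear subspaces `{x_i = 0 (i ∈ S), ξ_j = 0 (j ∉ S)}`. -/
theorem normal_crossing_conormal_ideal_radical_and_zero_set
    (K : Type*) [Field K] (n r : ℕ) (hr : r ≤ n) :
    (Ideal.span
        ({p | ∃ i : Fin n, (i : ℕ) < r ∧ p = X (Sum.inl i) * X (Sum.inr i)} ∪
          {p | ∃ i : Fin n, r ≤ (i : ℕ) ∧ p = X (Sum.inr i)} :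
          Set (MvPolynomial (Fin n ⊕ Fin n) K))).IsRadical ∧
    (∀ p : (Fin n ⊕ Fin n) → K,
      (∀ f ∈ (Ideal.span
          ({q | ∃ i : Fin n, (i : ℕ) < r ∧ q = X (Sum.inl i) * X (Sum.inr i)} ∪
            {q | ∃ i : Fin n, r ≤ (i : ℕ) ∧ q = X (Sum.inr i)} :
            Set (MvPolynomial (Fin n ⊕ Fin n) K))), eval p f = 0) ↔
        ∃ S : Finset (Fin n), (∀ i ∈ S, (i : ℕ) < r) ∧
          (∀ i ∈ S, p (Sum.inl i) = 0) ∧ (∀ j : Fin n, j ∉ S → p (Sum.inr j) = 0)) :=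
  normal_crossing_conormal_ideal_radical_and_zero_set_general K n r
end

section
/- Let K have characteristic 0, let D be the Weyl algebra in one variable, P a monic operator of order n, M = D/DP, and u the class of 1. Define F_0(M) to be the K[x]-submodule generated by u, (x∂)u, …, (x∂)^{n−1}u and F_k(M) = F_k(D)·F_0(M). Then x∂ annihilates Gr_F(M) (equivalently x∂·F_k(M) ⊆ F_k(M) for all k) if and only if, writing P = ∑ a_i(x)(x∂)^i with a_n = 1, all coefficients a_i(x) lie in K[x] localized away from 0 with no pole at 0. -/
/-!
Write `θ = x∂`. Since `[θ, f] = x f'`, `[θ, ∂ʲ] = -j ∂ʲ` and `x d/dx` keeps functions regular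
at `0`, the commutator of `θ` with `F_k(D)` stays in `F_k(D)`; hence `θ F_k(M) ⊆ F_k(M)` for all
`k` as soon as `θ F₀(M) ⊆ F₀(D) F₀(M)`. On the generators `θⁱu` of `F₀(M)` this only asks for
`θⁿu = -∑ aᵢ θⁱu` to lie in `F₀(D) F₀(M)`, whose elements are the sums `∑ cᵢ θⁱu` with `cᵢ`
regular at `0`. As `u, θu, …, θⁿ⁻¹u` are independent over the rational functions, that happens
exactly when every `aᵢ` is regular at `0`.
-/

/-- A rational function is regular at `0` (no pole at `0`). -/
def RegAt0 {K : Type*} [Field K] (f : RatFunc K) : Prop :=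
  ∃ p q : Polynomial K, q.eval 0 ≠ 0 ∧
    f * algebraMap (Polynomial K) (RatFunc K) q = algebraMap (Polynomial K) (RatFunc K) p

theorem AddSubgroup.smul_mem_of_mem_closure {R M : Type*} [Ring R] [AddCommGroup M]
    [Module R M] {S : Set R} {T : Set M} {H : AddSubgroup M}
    (hST : ∀ s ∈ S, ∀ t ∈ T, s • t ∈ H) {r : R} {m : M} (hr : r ∈ closure S)
    (hm : m ∈ closure T) : r • m ∈ H := by
  induction hr using closure_induction with
  | mem s hs =>
    induction hm using closure_induction with
    | mem t ht => exact hST s hs t ht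
    | zero => simp
    | add _ _ _ _ h₁ h₂ => rw [smul_add]; exact add_mem h₁ h₂
    | neg _ _ h => rw [smul_neg]; exact neg_mem h
  | zero => simp
  | add _ _ _ _ h₁ h₂ => rw [add_smul]; exact add_mem h₁ h₂
  | neg _ _ h => rw [neg_smul]; exact neg_mem h

section RegAt0

variable {K : Type*} [Field K]

theorem regAt0_algebraMap (p : Polynomial K) :
    RegAt0 (algebraMap (Polynomial K) (RatFunc K) p) :=
  ⟨p, 1, by simp, by simp⟩

theorem RegAt0.of_mul_algebraMap {f : RatFunc K} {q : Polynomial K}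
    (h : RegAt0 (f * algebraMap (Polynomial K) (RatFunc K) q)) (hq : q.eval 0 ≠ 0) :
    RegAt0 f := by
  obtain ⟨p', q', hq', h⟩ := h
  exact ⟨p', q * q', by simp [hq, hq'], by rw [map_mul, ← mul_assoc, h]⟩

variable (K) in
def regAt0Subring : Subring (RatFunc K) where
  carrier := {f | RegAt0 f}
  mul_mem' := by
    rintro f g ⟨p₁, q₁, hq₁, h₁⟩ ⟨p₂, q₂, hq₂, h₂⟩
    refine ⟨p₁ * p₂, q₁ * q₂, by simp [hq₁, hq₂], ?_⟩
    rw [map_mul, map_mul, ← h₁, ← h₂]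
    ring
  one_mem' := by simpa using regAt0_algebraMap (1 : Polynomial K)
  add_mem' := by
    rintro f g ⟨p₁, q₁, hq₁, h₁⟩ ⟨p₂, q₂, hq₂, h₂⟩
    refine ⟨p₁ * q₂ + p₂ * q₁, q₁ * q₂, by simp [hq₁, hq₂], ?_⟩
    rw [map_add, map_mul, map_mul, map_mul, ← h₁, ← h₂]
    ring
  zero_mem' := by simpa using regAt0_algebraMap (0 : Polynomial K)
  neg_mem' := by
    rintro f ⟨p, q, hq, h⟩
    exact ⟨-p, q, hq, by rw [map_neg, ← h, neg_mul]⟩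

theorem RegAt0.mul {f g : RatFunc K} (hf : RegAt0 f) (hg : RegAt0 g) : RegAt0 (f * g) :=
  (regAt0Subring K).mul_mem hf hg

theorem RegAt0.add {f g : RatFunc K} (hf : RegAt0 f) (hg : RegAt0 g) : RegAt0 (f + g) :=
  (regAt0Subring K).add_mem hf hg

theorem RegAt0.sub {f g : RatFunc K} (hf : RegAt0 f) (hg : RegAt0 g) : RegAt0 (f - g) :=
  (regAt0Subring K).sub_mem hf hg

theorem RegAt0.neg {f : RatFunc K} (hf : RegAt0 f) : RegAt0 (-f) :=
  (regAt0Subring K).neg_mem hf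

theorem regAt0_zero : RegAt0 (0 : RatFunc K) := (regAt0Subring K).zero_mem

theorem regAt0_one : RegAt0 (1 : RatFunc K) := (regAt0Subring K).one_mem

theorem regAt0_X : RegAt0 (RatFunc.X : RatFunc K) := by
  simpa using regAt0_algebraMap (Polynomial.X : Polynomial K)

theorem RegAt0.derivation {f : RatFunc K} (hf : RegAt0 f)
    (δ : Derivation K (RatFunc K) (RatFunc K)) (hδX : RegAt0 (δ RatFunc.X)) :
    RegAt0 (δ f) := by
  have hpoly (p : Polynomial K) : RegAt0 (δ (algebraMap (Polynomial K) (RatFunc K) p)) := by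
    induction p using Polynomial.induction_on with
    | C a =>
      rw [RatFunc.algebraMap_C, ← RatFunc.algebraMap_eq_C, δ.map_algebraMap]
      exact regAt0_zero
    | add p q hp hq => rw [map_add, map_add]; exact hp.add hq
    | monomial n a h =>
      rw [pow_succ, ← mul_assoc, map_mul, δ.leibniz, RatFunc.algebraMap_X, smul_eq_mul,
        smul_eq_mul]
      exact ((regAt0_algebraMap _).mul hδX).add (regAt0_X.mul h)
  obtain ⟨p, q, hq, hfq⟩ := hf
  refine RegAt0.of_mul_algebraMap ?_ hq
  have hδfq := congrArg δ hfq
  rw [δ.leibniz, smul_eq_mul, smul_eq_mul] at hδfq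
  rw [mul_comm, eq_sub_of_add_eq' hδfq]
  exact (hpoly p).sub (RegAt0.mul ⟨p, q, hq, hfq⟩ (hpoly q))

end RegAt0

section Operators

variable {K D : Type*} [Field K] [Ring D] [Algebra K D]
  {φ : RatFunc K →ₐ[K] D} {δ : Derivation K (RatFunc K) (RatFunc K)} {d : D}

variable (φ d) in
/-- `F_k(D)`: operators of order at most `k` with coefficients regular at `0`. -/
def orderFiltration (k : ℕ) : AddSubgroup D :=
  AddSubgroup.closure {w | ∃ f : RatFunc K, RegAt0 f ∧ ∃ j ≤ k, w = φ f * d ^ j}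

theorem map_mul_pow_mem_orderFiltration {f : RatFunc K} (hf : RegAt0 f) {j k : ℕ}
    (hj : j ≤ k) : φ f * d ^ j ∈ orderFiltration φ d k :=
  AddSubgroup.subset_closure ⟨f, hf, j, hj, rfl⟩

theorem map_mem_orderFiltration {f : RatFunc K} (hf : RegAt0 f) (k : ℕ) :
    φ f ∈ orderFiltration φ d k := by
  simpa using map_mul_pow_mem_orderFiltration (d := d) hf k.zero_le

theorem orderFiltration_mono : Monotone (orderFiltration φ d) := fun _ _ hkl =>
  AddSubgroup.closure_mono fun _ ⟨f, hf, j, hj, hw⟩ => ⟨f, hf, j, hj.trans hkl, hw⟩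

theorem exists_eq_map_of_mem_orderFiltration_zero {w : D}
    (hw : w ∈ orderFiltration φ d 0) : ∃ g, RegAt0 g ∧ φ g = w := by
  suffices orderFiltration φ d 0 ≤ ((regAt0Subring K).map (φ : RatFunc K →+* D)).toAddSubgroup
    from Subring.mem_map.mp (this hw)
  refine AddSubgroup.closure_le _ |>.mpr ?_
  rintro _ ⟨f, hf, j, hj, rfl⟩
  rw [Nat.le_zero.mp hj, pow_zero, mul_one]
  exact ⟨f, hf, rfl⟩

theorem map_mul_mem_orderFiltration {f : RatFunc K} (hf : RegAt0 f) {k : ℕ} {w : D}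
    (hw : w ∈ orderFiltration φ d k) : φ f * w ∈ orderFiltration φ d k := by
  rw [← smul_eq_mul]
  refine AddSubgroup.smul_mem_of_mem_closure ?_ (AddSubgroup.subset_closure rfl) hw
  rintro _ rfl _ ⟨g, hg, j, hj, rfl⟩
  rw [smul_eq_mul, ← mul_assoc, ← map_mul]
  exact map_mul_pow_mem_orderFiltration (hf.mul hg) hj

variable {M : Type*} [AddCommGroup M] [Module D M]

variable (φ d) in
/-- `F_k(M) = F_k(D) · F₀`. -/
def moduleFiltration (F₀ : AddSubgroup M) (k : ℕ) : AddSubgroup M :=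
  AddSubgroup.closure {m | ∃ w ∈ orderFiltration φ d k, ∃ v ∈ F₀, m = w • v}

theorem smul_mem_moduleFiltration {F₀ : AddSubgroup M} {k : ℕ} {w : D}
    (hw : w ∈ orderFiltration φ d k) {v : M} (hv : v ∈ F₀) :
    w • v ∈ moduleFiltration φ d F₀ k :=
  AddSubgroup.subset_closure ⟨w, hw, v, hv, rfl⟩

variable (φ) in
/-- For `e = x∂` this is `F₀(M)`. -/
def polynomialSpan (e : D) (u : M) (n : ℕ) : AddSubgroup M :=
  AddSubgroup.closure {m | ∃ (p : Polynomial K) (i : ℕ), i < n ∧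
    m = (φ (algebraMap (Polynomial K) (RatFunc K) p) * e ^ i) • u}

variable (φ) in
def regularCombinations (e : D) (u : M) (n : ℕ) : AddSubgroup M where
  carrier := {m | ∃ c : Fin n → RatFunc K, (∀ i, RegAt0 (c i)) ∧
    m = ∑ i, (φ (c i) * e ^ (i : ℕ)) • u}
  add_mem' := by
    rintro _ _ ⟨c, hc, rfl⟩ ⟨c', hc', rfl⟩
    exact ⟨c + c', fun i => (hc i).add (hc' i),
      by simp [add_mul, add_smul, Finset.sum_add_distrib]⟩
  zero_mem' := ⟨0, fun _ => regAt0_zero, by simp⟩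
  neg_mem' := by
    rintro _ ⟨c, hc, rfl⟩
    exact ⟨-c, fun i => (hc i).neg, by simp [neg_mul, neg_smul]⟩

theorem map_mul_pow_smul_mem_regularCombinations {e : D} {u : M} {n : ℕ} {c : RatFunc K}
    (hc : RegAt0 c) (i : Fin n) : (φ c * e ^ (i : ℕ)) • u ∈ regularCombinations φ e u n := by
  classical
  refine ⟨Pi.single i c, fun j => ?_, ?_⟩
  · rcases eq_or_ne j i with rfl | hj
    · simpa using hc
    · simpa [hj] using regAt0_zero
  · rw [Fintype.sum_eq_single i fun j hj => by simp [hj]]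
    simp

theorem moduleFiltration_zero_le_regularCombinations (e : D) (u : M) (n : ℕ) :
    moduleFiltration φ d (polynomialSpan φ e u n) 0 ≤ regularCombinations φ e u n := by
  refine AddSubgroup.closure_le _ |>.mpr ?_
  rintro _ ⟨w, hw, v, hv, rfl⟩
  obtain ⟨g, hg, rfl⟩ := exists_eq_map_of_mem_orderFiltration_zero hw
  refine AddSubgroup.smul_mem_of_mem_closure ?_ (AddSubgroup.subset_closure rfl) hv
  rintro _ rfl _ ⟨p, i, hi, rfl⟩
  rw [smul_smul, ← mul_assoc, ← map_mul]
  exact map_mul_pow_smul_mem_regularCombinations (hg.mul (regAt0_algebraMap p)) ⟨i, hi⟩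

theorem map_mul_pow_smul_mem_moduleFiltration_zero {e : D} {u : M} {n : ℕ} {c : RatFunc K}
    (hc : RegAt0 c) {i : ℕ} (hi : i < n) :
    (φ c * e ^ i) • u ∈ moduleFiltration φ d (polynomialSpan φ e u n) 0 := by
  rw [mul_smul]
  refine smul_mem_moduleFiltration (map_mem_orderFiltration hc 0)
    (AddSubgroup.subset_closure ⟨1, i, hi, by simp⟩)

theorem regAt0_of_sum_mem_moduleFiltration_zero {e : D} {u : M} {n : ℕ}
    (hindep : ∀ c : Fin n → RatFunc K, ∑ i, (φ (c i) * e ^ (i : ℕ)) • u = 0 → ∀ i, c i = 0)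
    {b : Fin n → RatFunc K}
    (hb : ∑ i, (φ (b i) * e ^ (i : ℕ)) • u ∈ moduleFiltration φ d (polynomialSpan φ e u n) 0)
    (i : Fin n) : RegAt0 (b i) := by
  obtain ⟨c, hc, hbc⟩ := moduleFiltration_zero_le_regularCombinations e u n hb
  have hsub : ∑ i, (φ ((b - c) i) * e ^ (i : ℕ)) • u = 0 := by
    simp only [Pi.sub_apply, map_sub, sub_mul, sub_smul, Finset.sum_sub_distrib, hbc, sub_self]
  rw [sub_eq_zero.mp (hindep _ hsub i)]
  exact hc i

theorem euler_mul_map (hd : ∀ f, d * φ f = φ f * d + φ (δ f)) (f : RatFunc K) :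
    φ RatFunc.X * d * φ f = φ f * (φ RatFunc.X * d) + φ (RatFunc.X * δ f) := by
  rw [mul_assoc, hd, mul_add, ← mul_assoc, ← map_mul, mul_comm RatFunc.X, map_mul, mul_assoc,
    ← map_mul]

section Commutation

variable (hd : ∀ f, d * φ f = φ f * d + φ (δ f)) (hδX : δ RatFunc.X = 1)
include hd hδX

theorem euler_mul_pow (j : ℕ) :
    φ RatFunc.X * d * d ^ j = d ^ j * (φ RatFunc.X * d) - j • d ^ j := by
  have hdθ : φ RatFunc.X * d * d = d * (φ RatFunc.X * d) - d := by
    rw [← mul_assoc, hd, hδX, map_one, add_mul, one_mul, add_sub_cancel_right]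
  induction j with
  | zero => simp
  | succ j ih =>
    rw [pow_succ, ← mul_assoc, ih, sub_mul, mul_assoc, hdθ, smul_mul_assoc, mul_sub,
      ← mul_assoc, ← pow_succ, succ_nsmul]
    abel

theorem mul_mem_orderFiltration_succ {k : ℕ} {w : D} (hw : w ∈ orderFiltration φ d k) :
    d * w ∈ orderFiltration φ d (k + 1) := by
  rw [← smul_eq_mul]
  refine AddSubgroup.smul_mem_of_mem_closure ?_ (AddSubgroup.subset_closure rfl) hw
  rintro _ rfl _ ⟨f, hf, j, hj, rfl⟩
  rw [smul_eq_mul, ← mul_assoc, hd, add_mul, mul_assoc, ← pow_succ']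
  exact add_mem (map_mul_pow_mem_orderFiltration hf (by omega))
    (map_mul_pow_mem_orderFiltration (hf.derivation δ (hδX ▸ regAt0_one)) (by omega))

theorem pow_mul_map_mem_orderFiltration {g : RatFunc K} (hg : RegAt0 g) (j : ℕ) :
    d ^ j * φ g ∈ orderFiltration φ d j := by
  induction j with
  | zero => simpa using map_mem_orderFiltration hg 0
  | succ j ih => rw [pow_succ', mul_assoc]; exact mul_mem_orderFiltration_succ hd hδX ih

theorem mul_map_mem_orderFiltration {k : ℕ} {w : D} (hw : w ∈ orderFiltration φ d k)
    {g : RatFunc K} (hg : RegAt0 g) : w * φ g ∈ orderFiltration φ d k := by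
  refine AddSubgroup.smul_mem_of_mem_closure (M := D) ?_ hw (AddSubgroup.subset_closure rfl)
  rintro _ ⟨f, hf, j, hj, rfl⟩ _ rfl
  rw [smul_eq_mul, mul_assoc]
  exact orderFiltration_mono hj
    (map_mul_mem_orderFiltration hf (pow_mul_map_mem_orderFiltration hd hδX hg j))

theorem euler_mul_sub_mul_euler_mem_orderFiltration {k : ℕ} {w : D}
    (hw : w ∈ orderFiltration φ d k) :
    φ RatFunc.X * d * w - w * (φ RatFunc.X * d) ∈ orderFiltration φ d k := by
  induction hw using AddSubgroup.closure_induction with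
  | mem _ hw =>
    obtain ⟨f, hf, j, hj, rfl⟩ := hw
    have hcomm : φ RatFunc.X * d * (φ f * d ^ j) - φ f * d ^ j * (φ RatFunc.X * d) =
        φ (RatFunc.X * δ f) * d ^ j - j • (φ f * d ^ j) := by
      rw [← mul_assoc, euler_mul_map hd, add_mul, mul_assoc, euler_mul_pow hd hδX, mul_sub,
        mul_smul_comm, ← mul_assoc]
      abel
    rw [hcomm]
    exact sub_mem
      (map_mul_pow_mem_orderFiltration (regAt0_X.mul (hf.derivation δ (hδX ▸ regAt0_one))) hj)
      (nsmul_mem (map_mul_pow_mem_orderFiltration hf hj) j)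
  | zero => simp
  | add w w' _ _ h h' =>
    rw [mul_add, add_mul]
    convert add_mem h h' using 1
    abel
  | neg w _ h =>
    rw [mul_neg, neg_mul]
    convert neg_mem h using 1
    abel

theorem smul_mem_moduleFiltration_of_mem_zero {F₀ : AddSubgroup M} {k : ℕ} {w : D}
    (hw : w ∈ orderFiltration φ d k) {m : M} (hm : m ∈ moduleFiltration φ d F₀ 0) :
    w • m ∈ moduleFiltration φ d F₀ k := by
  refine AddSubgroup.smul_mem_of_mem_closure ?_ (AddSubgroup.subset_closure rfl) hm
  rintro _ rfl _ ⟨w', hw', v, hv, rfl⟩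
  obtain ⟨g, hg, rfl⟩ := exists_eq_map_of_mem_orderFiltration_zero hw'
  rw [smul_smul]
  exact smul_mem_moduleFiltration (mul_map_mem_orderFiltration hd hδX hw hg) hv

theorem euler_smul_mem_moduleFiltration {F₀ : AddSubgroup M}
    (h₀ : ∀ v ∈ F₀, (φ RatFunc.X * d) • v ∈ moduleFiltration φ d F₀ 0) {k : ℕ} {m : M}
    (hm : m ∈ moduleFiltration φ d F₀ k) :
    (φ RatFunc.X * d) • m ∈ moduleFiltration φ d F₀ k := by
  refine AddSubgroup.smul_mem_of_mem_closure (S := {φ RatFunc.X * d}) ?_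
    (AddSubgroup.subset_closure rfl) hm
  rintro _ rfl _ ⟨w, hw, v, hv, rfl⟩
  rw [smul_smul, ← sub_add_cancel (φ RatFunc.X * d * w) (w * (φ RatFunc.X * d)), add_smul,
    mul_smul]
  exact add_mem
    (smul_mem_moduleFiltration (euler_mul_sub_mul_euler_mem_orderFiltration hd hδX hw) hv)
    (smul_mem_moduleFiltration_of_mem_zero hd hδX hw (h₀ v hv))

theorem euler_smul_mem_moduleFiltration_zero {u : M} {n : ℕ}
    (hn : (φ RatFunc.X * d) ^ n • u ∈
      moduleFiltration φ d (polynomialSpan φ (φ RatFunc.X * d) u n) 0)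
    {v : M} (hv : v ∈ polynomialSpan φ (φ RatFunc.X * d) u n) :
    (φ RatFunc.X * d) • v ∈ moduleFiltration φ d (polynomialSpan φ (φ RatFunc.X * d) u n) 0 := by
  refine AddSubgroup.smul_mem_of_mem_closure ?_ (AddSubgroup.subset_closure rfl) hv
  rintro _ rfl _ ⟨p, i, hi, rfl⟩
  rw [smul_smul, ← mul_assoc, euler_mul_map hd, add_mul, mul_assoc, ← pow_succ', add_smul]
  refine add_mem ?_ (map_mul_pow_smul_mem_moduleFiltration_zero
    (regAt0_X.mul ((regAt0_algebraMap p).derivation δ (hδX ▸ regAt0_one))) hi)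
  rcases (Nat.succ_le_of_lt hi).lt_or_eq with hi' | rfl
  · exact map_mul_pow_smul_mem_moduleFiltration_zero (regAt0_algebraMap p) hi'
  · rw [mul_smul]
    exact smul_mem_moduleFiltration_of_mem_zero hd hδX
      (map_mem_orderFiltration (regAt0_algebraMap p) 0) hn

end Commutation

end Operators

theorem kashiwara_regular_iff_fuchs_one_variable_general
    (K : Type*) [Field K]
    (D : Type*) [Ring D] [Algebra K D]
    (φ : RatFunc K →ₐ[K] D)
    (derR : RatFunc K →ₗ[K] RatFunc K)
    (hderX : derR RatFunc.X = 1)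
    (hderLeib : ∀ f g : RatFunc K, derR (f * g) = f * derR g + g * derR f)
    (d : D) (hd : ∀ f : RatFunc K, d * φ f = φ f * d + φ (derR f))
    (n : ℕ) (a : ℕ → RatFunc K) (han : a n = 1)
    (P : D) (hP : P = ∑ i ∈ Finset.range (n + 1), φ (a i) * (φ RatFunc.X * d) ^ i)
    (M : Type*) [AddCommGroup M] [Module D M]
    (q : D →ₗ[D] M)
    (hker : LinearMap.ker q = Submodule.span D {P})
    (u : M) (hu : u = q 1)
    (hindep : ∀ c : Fin n → RatFunc K,
      ∑ i : Fin n, (φ (c i) * (φ RatFunc.X * d) ^ (i : ℕ)) • u = 0 → ∀ i, c i = 0)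
    (F₀ : AddSubgroup M)
    (hF₀ : F₀ = AddSubgroup.closure {m | ∃ (p : Polynomial K) (i : ℕ), i < n ∧
      m = (φ (algebraMap (Polynomial K) (RatFunc K) p) * (φ RatFunc.X * d) ^ i) • u})
    (FD : ℕ → AddSubgroup D)
    (hFD : ∀ k, FD k = AddSubgroup.closure
      {w | ∃ f : RatFunc K, RegAt0 f ∧ ∃ j ≤ k, w = φ f * d ^ j})
    (FM : ℕ → AddSubgroup M)
    (hFM : ∀ k, FM k = AddSubgroup.closure {m | ∃ w ∈ FD k, ∃ v ∈ F₀, m = w • v}) :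
    (∀ k : ℕ, ∀ m ∈ FM k, (φ RatFunc.X * d) • m ∈ FM k) ↔ (∀ i ≤ n, RegAt0 (a i)) := by
  let δ : Derivation K (RatFunc K) (RatFunc K) :=
    Derivation.mk' derR fun f g => by rw [hderLeib, smul_eq_mul, smul_eq_mul]
  replace hd : ∀ f, d * φ f = φ f * d + φ (δ f) := hd
  replace hderX : δ RatFunc.X = 1 := hderX
  obtain rfl : FD = orderFiltration φ d := funext hFD
  obtain rfl : F₀ = polynomialSpan φ (φ RatFunc.X * d) u n := hF₀
  obtain rfl : FM = moduleFiltration φ d (polynomialSpan φ (φ RatFunc.X * d) u n) := funext hFM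
  set θ := φ RatFunc.X * d
  have hPu : P • u = 0 := by
    rw [hu, ← map_smul, smul_eq_mul, mul_one, ← LinearMap.mem_ker, hker]
    exact Submodule.mem_span_singleton_self P
  have hrel : θ ^ n • u = -∑ i : Fin n, (φ (a i) * θ ^ (i : ℕ)) • u := by
    rw [hP, Finset.sum_smul, Finset.sum_range_succ, han, map_one, one_mul,
      ← Fin.sum_univ_eq_sum_range (fun i => (φ (a i) * θ ^ i) • u)] at hPu
    exact eq_neg_of_add_eq_zero_right hPu
  constructor
  · intro H i hi
    rcases hi.lt_or_eq with hi | rfl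
    · obtain ⟨m, rfl⟩ := Nat.exists_eq_add_of_lt hi
      have hθn := H 0 _ (map_mul_pow_smul_mem_moduleFiltration_zero (d := d) (e := θ) (u := u)
        regAt0_one (Nat.lt_succ_self (i + m)))
      rw [map_one, one_mul, smul_smul, ← pow_succ', hrel, neg_mem_iff] at hθn
      exact regAt0_of_sum_mem_moduleFiltration_zero hindep hθn ⟨i, hi⟩
    · exact han ▸ regAt0_one
  · intro hreg k m hm
    refine euler_smul_mem_moduleFiltration hd hderX
      (fun v hv => euler_smul_mem_moduleFiltration_zero hd hderX ?_ hv) hm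
    rw [hrel, neg_mem_iff]
    exact AddSubgroup.sum_mem _ fun i _ =>
      map_mul_pow_smul_mem_moduleFiltration_zero (hreg i i.2.le) i.2

/-- Kashiwara regularity versus Fuchs regularity for `M = D/DP` in one variable.

`D` is a ring of differential operators in one variable: it receives the rational
functions via `φ`, and contains a derivation element `∂` with `∂·f = f·∂ + f'`.
`P = ∑_{i≤n} a_i(x) (x∂)^i` is monic (`a_n = 1`), `M = D/DP`, `u` the class of `1`,
`F₀(M)` the `K[x]`-module generated by `u, (x∂)u, …, (x∂)^{n-1}u`, and
`F_k(M) = F_k(D)·F₀(M)` where `F_k(D)` consists of operators of order `≤ k` with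
coefficients regular at `0`.  Assuming `u, (x∂)u, …, (x∂)^{n-1}u` are linearly
independent over the rational functions, the symbol `x∂` annihilates `Gr_F M`
(equivalently `x∂ · F_k(M) ⊆ F_k(M)` for all `k`) if and only if all the coefficients
`a_i` are regular at `0`. -/
theorem kashiwara_regular_iff_fuchs_one_variable
    (K : Type*) [Field K] [CharZero K]
    (D : Type*) [Ring D] [Algebra K D]
    (φ : RatFunc K →ₐ[K] D)
    (derR : RatFunc K →ₗ[K] RatFunc K)
    (hderX : derR RatFunc.X = 1)
    (hderLeib : ∀ f g : RatFunc K, derR (f * g) = f * derR g + g * derR f)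
    (d : D) (hd : ∀ f : RatFunc K, d * φ f = φ f * d + φ (derR f))
    (n : ℕ) (hn : 1 ≤ n) (a : ℕ → RatFunc K) (han : a n = 1)
    (P : D) (hP : P = ∑ i ∈ Finset.range (n + 1), φ (a i) * (φ RatFunc.X * d) ^ i)
    (M : Type*) [AddCommGroup M] [Module D M]
    (q : D →ₗ[D] M) (hq : Function.Surjective q)
    (hker : LinearMap.ker q = Submodule.span D {P})
    (u : M) (hu : u = q 1)
    (hindep : ∀ c : Fin n → RatFunc K,
      ∑ i : Fin n, (φ (c i) * (φ RatFunc.X * d) ^ (i : ℕ)) • u = 0 → ∀ i, c i = 0)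
    (F₀ : AddSubgroup M)
    (hF₀ : F₀ = AddSubgroup.closure {m | ∃ (p : Polynomial K) (i : ℕ), i < n ∧
      m = (φ (algebraMap (Polynomial K) (RatFunc K) p) * (φ RatFunc.X * d) ^ i) • u})
    (FD : ℕ → AddSubgroup D)
    (hFD : ∀ k, FD k = AddSubgroup.closure
      {w | ∃ f : RatFunc K, RegAt0 f ∧ ∃ j ≤ k, w = φ f * d ^ j})
    (FM : ℕ → AddSubgroup M)
    (hFM : ∀ k, FM k = AddSubgroup.closure {m | ∃ w ∈ FD k, ∃ v ∈ F₀, m = w • v}) :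
    (∀ k : ℕ, ∀ m ∈ FM k, (φ RatFunc.X * d) • m ∈ FM k) ↔ (∀ i ≤ n, RegAt0 (a i)) :=
  kashiwara_regular_iff_fuchs_one_variable_general K D φ derR hderX hderLeib d hd n a han P hP M q
    hker u hu hindep F₀ hF₀ FD hFD FM hFM
end

section
/- Let A = K[x,x^{-1}] (char K = 0) and let (E,∇) be a free A-module of rank m with connection such that the matrix of ∂ in some basis has entries in A with poles of order ≤ s+1 at 0 (i.e. x^{s+1}∂ preserves the lattice L spanned by the basis over K[x]). Suppose moreover that in Gr of the order-filtered ring of differential operators, the annihilator of Gr_F(E) for the filtration F^i = D_i·L is a radical ideal. Then x∂ preserves L_{η} after localization and completion at 0, i.e. the connection is regular at 0. -/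
noncomputable section

/-- The derivative `d/dx` on Laurent polynomials, as a `K`-linear map
(`T^n ↦ n·T^{n-1}`). -/
def lder (K : Type*) [CommRing K] : LaurentPolynomial K →ₗ[K] LaurentPolynomial K :=
  (Finsupp.lsum K fun (n : ℤ) =>
    LinearMap.toSpanSingleton K (LaurentPolynomial K)
      ((n : K) • LaurentPolynomial.T (n - 1))) ∘ₗ
    (AddMonoidAlgebra.coeffLinearEquiv K).toLinearMap

variable (K : Type*) [Field K] (m : ℕ)

/-- Multiplication by a Laurent polynomial, as a `K`-linear endomorphism of the free
module `E = A^m`. -/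
def smulT (a : LaurentPolynomial K) :
    (Fin m → LaurentPolynomial K) →ₗ[K] (Fin m → LaurentPolynomial K) :=
  (LinearMap.lsmul (LaurentPolynomial K) (Fin m → LaurentPolynomial K) a).restrictScalars K

/-- The order filtration on differential operators with polynomial coefficients acting on
`E`, built from the connection `nab`:  `OpF 0` is spanned by multiplications by
polynomials, and `OpF (k+1) = OpF k + OpF k ∘ nab`. -/
def OpF (nab : (Fin m → LaurentPolynomial K) →ₗ[K] (Fin m → LaurentPolynomial K)) :
    ℕ → Submodule K ((Fin m → LaurentPolynomial K) →ₗ[K] (Fin m → LaurentPolynomial K))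
  | 0 => Submodule.span K {f | ∃ k : ℕ, f = smulT K m (LaurentPolynomial.T (k : ℤ))}
  | k + 1 => OpF nab k ⊔ Submodule.span K {g | ∃ h ∈ OpF nab k, g = h ∘ₗ nab}

/-- The standard `K[x]`-lattice in `E = A^m`, spanned by `x^k e_i`. -/
def stdLat : Submodule K (Fin m → LaurentPolynomial K) :=
  Submodule.span K {v | ∃ (k : ℕ) (i : Fin m),
    v = (LaurentPolynomial.T (k : ℤ) : LaurentPolynomial K) • (Pi.single i 1 : Fin m → LaurentPolynomial K)}

/-- The good filtration `F^j = D_j · L` of `E` induced by the lattice `L` (extended by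
zero in negative degrees). -/
def latFilt (nab : (Fin m → LaurentPolynomial K) →ₗ[K] (Fin m → LaurentPolynomial K))
    (j : ℤ) : Submodule K (Fin m → LaurentPolynomial K) :=
  if j < 0 then ⊥ else
    Submodule.span K {v | ∃ f ∈ OpF K m nab j.toNat, ∃ w ∈ stdLat K m, v = f w}

end

/-
Write `F_n = D_n · L` for the filtration by the lattice `L`. Since `x^{s+1}∇` preserves `L` and
`[∇, x^{s+1}] = (s+1) x^s`, the operator `x^{s+1}∇` preserves every `F_n`. Expanding
`(x∇)^{s+1} = Σ_{i ≤ s+1} c_i x^i ∇^i`, the terms with `i ≤ s` shift the filtration by at most `s`,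
and so does the top term `x^{s+1}∇ ∘ ∇^s`. Thus `(x∇)^{s+1}`, of order `s+1`, has symbol
annihilating `Gr_F E`; by radicality so does `x∇`, i.e. `x∇ (F_0) ⊆ F_0 = L`.
-/

open LaurentPolynomial

theorem lder_T {K : Type*} [CommRing K] (n : ℤ) : lder K (T n) = (n : K) • T (n - 1) := by
  rw [lder, T, LinearMap.comp_apply, LinearEquiv.coe_coe]
  erw [Finsupp.lsum_single]
  simp

section LatticeFiltration

variable {K : Type*} [CommRing K] {M : Type*} [AddCommGroup M] [Module K[T;T⁻¹] M] [Module K M]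
  {nab : M →ₗ[K] M}

variable (nab) in
def latticeFilt (L : Submodule K M) (n : ℕ) : Submodule K M :=
  Submodule.span K {v | ∃ (k i : ℕ) (w : M), i ≤ n ∧ w ∈ L ∧ v = (T k : K[T;T⁻¹]) • (nab ^ i) w}

variable {L : Submodule K M} {n : ℕ} {v : M}

theorem T_smul_nab_pow_mem_latticeFilt (k : ℕ) {i : ℕ} (hi : i ≤ n) {w : M} (hw : w ∈ L) :
    (T k : K[T;T⁻¹]) • (nab ^ i) w ∈ latticeFilt nab L n :=
  Submodule.subset_span ⟨k, i, w, hi, hw, rfl⟩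

theorem le_latticeFilt : L ≤ latticeFilt nab L n := fun w hw => by
  simpa using T_smul_nab_pow_mem_latticeFilt (nab := nab) 0 n.zero_le hw

theorem latticeFilt_mono : Monotone (latticeFilt nab L) := fun _ _ h =>
  Submodule.span_mono fun _ ⟨k, i, w, hi, hw, hv⟩ => ⟨k, i, w, hi.trans h, hw, hv⟩

theorem latticeFilt_zero (hL : ∀ k : ℕ, ∀ v ∈ L, (T k : K[T;T⁻¹]) • v ∈ L) :
    latticeFilt nab L 0 = L := by
  refine le_antisymm (Submodule.span_le.2 ?_) le_latticeFilt
  rintro _ ⟨k, i, w, hi, hw, rfl⟩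
  obtain rfl : i = 0 := Nat.le_zero.1 hi
  exact hL k _ hw

variable [IsScalarTower K K[T;T⁻¹] M]

theorem T_smul_mem_latticeFilt (k : ℕ) (hv : v ∈ latticeFilt nab L n) :
    (T k : K[T;T⁻¹]) • v ∈ latticeFilt nab L n := by
  induction hv using Submodule.span_induction with
  | mem v hv =>
    obtain ⟨l, i, w, hi, hw, rfl⟩ := hv
    rw [smul_smul, ← T_add]
    exact_mod_cast T_smul_nab_pow_mem_latticeFilt (k + l) hi hw
  | zero => simp
  | add u v _ _ hu hv => rw [smul_add]; exact add_mem hu hv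
  | smul c v _ hv => rw [smul_comm]; exact Submodule.smul_mem _ c hv

variable (hLeib : ∀ (a : K[T;T⁻¹]) (v : M), nab (a • v) = lder K a • v + a • nab v)
include hLeib

theorem nab_T_smul (k : ℤ) (v : M) :
    nab ((T k : K[T;T⁻¹]) • v) =
      (k : K) • (T (k - 1) : K[T;T⁻¹]) • v + (T k : K[T;T⁻¹]) • nab v := by
  rw [hLeib, lder_T, smul_assoc]

theorem T_smul_nab_T_smul (a k : ℤ) (v : M) :
    (T a : K[T;T⁻¹]) • nab ((T k : K[T;T⁻¹]) • v) =
      (k : K) • (T (a + k - 1) : K[T;T⁻¹]) • v + (T k : K[T;T⁻¹]) • (T a : K[T;T⁻¹]) • nab v := by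
  rw [nab_T_smul hLeib, smul_add, smul_comm (T a), smul_smul, ← T_add, smul_comm (T a),
    add_sub_assoc]

theorem nab_mem_latticeFilt (hv : v ∈ latticeFilt nab L n) :
    nab v ∈ latticeFilt nab L (n + 1) := by
  refine (Submodule.span_le (p := (latticeFilt nab L (n + 1)).comap nab)).2 ?_ hv
  rintro _ ⟨k, i, w, hi, hw, rfl⟩
  rw [SetLike.mem_coe, Submodule.mem_comap, nab_T_smul hLeib, ← Module.End.mul_apply,
    ← pow_succ']
  refine add_mem ?_ (T_smul_nab_pow_mem_latticeFilt k (by omega) hw)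
  rcases k with _ | k
  · simp
  · exact Submodule.smul_mem _ _
      (by simpa using T_smul_nab_pow_mem_latticeFilt k (hi.trans n.le_succ) hw)

theorem nab_pow_mem_latticeFilt (i : ℕ) (hv : v ∈ latticeFilt nab L n) :
    (nab ^ i) v ∈ latticeFilt nab L (n + i) := by
  induction i with
  | zero => simpa using hv
  | succ i ih => rw [pow_succ', Module.End.mul_apply]; exact nab_mem_latticeFilt hLeib ih

section Pole

variable {s : ℕ} (hpole : ∀ v ∈ L, (T ((s : ℤ) + 1) : K[T;T⁻¹]) • nab v ∈ L)
include hpole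

theorem T_smul_nab_nab_pow_mem_latticeFilt (i : ℕ) {w : M} (hw : w ∈ L) :
    (T ((s : ℤ) + 1) : K[T;T⁻¹]) • nab ((nab ^ i) w) ∈ latticeFilt nab L i := by
  induction i with
  | zero => exact le_latticeFilt (hpole w hw)
  | succ i ih =>
    -- `x^{s+1} ∇ ∇u = ∇ (x^{s+1} ∇u) - (s+1) x^s ∇u`
    have h := nab_T_smul hLeib ((s : ℤ) + 1) (nab ((nab ^ i) w))
    rw [pow_succ', Module.End.mul_apply, eq_sub_of_add_eq' h.symm]
    refine sub_mem (nab_mem_latticeFilt hLeib ih) (Submodule.smul_mem _ _ ?_)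
    rw [add_sub_cancel_right, ← Module.End.mul_apply, ← pow_succ']
    exact T_smul_nab_pow_mem_latticeFilt s le_rfl hw

theorem T_smul_nab_mem_latticeFilt (hv : v ∈ latticeFilt nab L n) :
    (T ((s : ℤ) + 1) : K[T;T⁻¹]) • nab v ∈ latticeFilt nab L n := by
  refine (Submodule.span_le
    (p := (latticeFilt nab L n).comap ((T ((s : ℤ) + 1) : K[T;T⁻¹]) • nab))).2 ?_ hv
  rintro _ ⟨k, i, w, hi, hw, rfl⟩
  rw [SetLike.mem_coe, Submodule.mem_comap, LinearMap.smul_apply, T_smul_nab_T_smul hLeib]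
  refine add_mem (Submodule.smul_mem _ _ ?_) (T_smul_mem_latticeFilt k
    (latticeFilt_mono hi (T_smul_nab_nab_pow_mem_latticeFilt hLeib hpole i hw)))
  convert T_smul_nab_pow_mem_latticeFilt (s + k) hi hw using 2
  push_cast; ring_nf

end Pole

theorem T_one_smul_nab_pow_mem_span (t : ℕ) (v : M) :
    (((T 1 : K[T;T⁻¹]) • nab) ^ t) v ∈
      Submodule.span K {u | ∃ i ≤ t, u = (T i : K[T;T⁻¹]) • (nab ^ i) v} := by
  induction t with
  | zero => exact Submodule.subset_span ⟨0, le_rfl, by simp⟩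
  | succ t ih =>
    rw [pow_succ', Module.End.mul_apply]
    refine (Submodule.span_le (p := (Submodule.span K _).comap ((T 1 : K[T;T⁻¹]) • nab))).2
      ?_ ih
    rintro _ ⟨i, hi, rfl⟩
    rw [SetLike.mem_coe, Submodule.mem_comap, LinearMap.smul_apply, T_smul_nab_T_smul hLeib,
      smul_smul, ← T_add, ← Module.End.mul_apply, ← pow_succ']
    refine add_mem (Submodule.smul_mem _ _ (Submodule.subset_span ⟨i, by omega, by simp⟩))
      (Submodule.subset_span ⟨i + 1, by omega, by push_cast; ring_nf⟩)

theorem T_one_smul_nab_pow_mem_latticeFilt {s : ℕ}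
    (hpole : ∀ v ∈ L, (T ((s : ℤ) + 1) : K[T;T⁻¹]) • nab v ∈ L) (hv : v ∈ latticeFilt nab L n) :
    (((T 1 : K[T;T⁻¹]) • nab) ^ (s + 1)) v ∈ latticeFilt nab L (n + s) := by
  refine (Submodule.span_le (p := latticeFilt nab L (n + s))).2 ?_
    (T_one_smul_nab_pow_mem_span hLeib (s + 1) v)
  rintro _ ⟨i, hi, rfl⟩
  rcases hi.lt_or_eq with hi | rfl
  · exact T_smul_mem_latticeFilt i
      (latticeFilt_mono (by omega) (nab_pow_mem_latticeFilt hLeib i hv))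
  · rw [pow_succ', Module.End.mul_apply]
    exact_mod_cast T_smul_nab_mem_latticeFilt hLeib hpole (nab_pow_mem_latticeFilt hLeib s hv)

end LatticeFiltration

section FreeModule

variable {K : Type*} [Field K] {m : ℕ} {nab : (Fin m → K[T;T⁻¹]) →ₗ[K] (Fin m → K[T;T⁻¹])}

theorem T_smul_mem_stdLat (k : ℕ) {v : Fin m → K[T;T⁻¹]} (hv : v ∈ stdLat K m) :
    (T k : K[T;T⁻¹]) • v ∈ stdLat K m := by
  refine (Submodule.span_le (p := (stdLat K m).comap (smulT K m (T k)))).2 ?_ hv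
  rintro _ ⟨l, i, rfl⟩
  refine Submodule.subset_span ⟨k + l, i, ?_⟩
  change (T k : K[T;T⁻¹]) • (T l : K[T;T⁻¹]) • (Pi.single i 1 : Fin m → K[T;T⁻¹]) = _
  rw [smul_smul, ← T_add, Nat.cast_add]

theorem exists_finset_stdLat_eq_span : ∃ S : Finset (Fin m → K[T;T⁻¹]),
    stdLat K m = Submodule.span K {v | ∃ t ∈ S, ∃ k : ℕ, v = (T k : K[T;T⁻¹]) • t} := by
  classical
  refine ⟨Finset.univ.image fun i => Pi.single i 1, congrArg _ (Set.ext fun v => ?_)⟩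
  simp only [Finset.mem_image, Finset.mem_univ, true_and, exists_exists_eq_and]
  exact exists_comm

theorem span_stdLat_eq_top :
    Submodule.span K[T;T⁻¹] (stdLat K m : Set (Fin m → K[T;T⁻¹])) = ⊤ := by
  refine eq_top_iff.2 ((Pi.basisFun K[T;T⁻¹] (Fin m)).span_eq.ge.trans (Submodule.span_mono ?_))
  rintro _ ⟨i, rfl⟩
  exact Submodule.subset_span ⟨0, i, by simp⟩

variable (nab) in
theorem T_smul_pow_mem_OpF (k i : ℕ) :
    (T k : K[T;T⁻¹]) • (nab ^ i : Module.End K (Fin m → K[T;T⁻¹])) ∈ OpF K m nab i := by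
  induction i with
  | zero => exact Submodule.subset_span ⟨k, LinearMap.ext fun _ => rfl⟩
  | succ i ih =>
    refine Submodule.mem_sup_right (Submodule.subset_span ⟨_, ih, ?_⟩)
    rw [pow_succ, Module.End.mul_eq_comp, LinearMap.smul_comp]

theorem OpF_mono : Monotone (OpF K m nab) :=
  monotone_nat_of_le_succ fun _ => le_sup_left

variable (hLeib : ∀ (a : K[T;T⁻¹]) (v : Fin m → K[T;T⁻¹]), nab (a • v) = lder K a • v + a • nab v)
include hLeib

theorem OpF_le_compatibleMaps (L : Submodule K (Fin m → K[T;T⁻¹])) (n : ℕ) :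
    OpF K m nab n ≤ ⨅ j, (latticeFilt nab L j).compatibleMaps (latticeFilt nab L (j + n)) := by
  induction n with
  | zero =>
    refine Submodule.span_le.2 ?_
    rintro _ ⟨k, rfl⟩
    exact Submodule.mem_iInf _ |>.2 fun j v hv => T_smul_mem_latticeFilt k hv
  | succ n ih =>
    refine sup_le (ih.trans (iInf_mono fun j f hf v hv => latticeFilt_mono (by omega) (hf hv)))
      (Submodule.span_le.2 ?_)
    rintro _ ⟨f, hf, rfl⟩
    refine Submodule.mem_iInf _ |>.2 fun j v hv => ?_
    rw [← add_assoc, add_right_comm]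
    exact (Submodule.mem_iInf _ |>.1 (ih hf) (j + 1)) (nab_mem_latticeFilt hLeib hv)

theorem latFilt_natCast (n : ℕ) : latFilt K m nab n = latticeFilt nab (stdLat K m) n := by
  rw [latFilt, if_neg (by omega), Int.toNat_natCast]
  refine le_antisymm (Submodule.span_le.2 ?_) (Submodule.span_le.2 ?_)
  · rintro _ ⟨f, hf, w, hw, rfl⟩
    simpa using
      (Submodule.mem_iInf _ |>.1 (OpF_le_compatibleMaps hLeib _ n hf) 0) (le_latticeFilt hw)
  · rintro _ ⟨k, i, w, hi, hw, rfl⟩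
    exact Submodule.subset_span ⟨_, OpF_mono hi (T_smul_pow_mem_OpF nab k i), w, hw, rfl⟩

theorem latFilt_zero : latFilt K m nab 0 = stdLat K m := by
  rw [← Nat.cast_zero, latFilt_natCast hLeib, latticeFilt_zero fun k _ => T_smul_mem_stdLat k]

theorem T_one_smul_nab_pow_mem_latFilt {s : ℕ}
    (hpole : ∀ v ∈ stdLat K m, (T ((s : ℤ) + 1) : K[T;T⁻¹]) • nab v ∈ stdLat K m)
    (j : ℤ) {v : Fin m → K[T;T⁻¹]} (hv : v ∈ latFilt K m nab j) :
    (((T 1 : K[T;T⁻¹]) • nab) ^ (s + 1)) v ∈ latFilt K m nab (j + s) := by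
  rcases lt_or_ge j 0 with hj | hj
  · rw [latFilt, if_pos hj, Submodule.mem_bot] at hv
    simp [hv]
  · lift j to ℕ using hj
    rw [latFilt_natCast hLeib] at hv
    exact_mod_cast
      latFilt_natCast hLeib (j + s) ▸ T_one_smul_nab_pow_mem_latticeFilt hLeib hpole hv

end FreeModule

theorem regular_connection_of_radical_annihilator_general
    (K : Type*) [Field K] (m : ℕ)
    (nab : (Fin m → LaurentPolynomial K) →ₗ[K] (Fin m → LaurentPolynomial K))
    (hLeib : ∀ (a : LaurentPolynomial K) (v : Fin m → LaurentPolynomial K),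
      nab (a • v) = lder K a • v + a • nab v)
    (s : ℕ)
    (hpole : ∀ v ∈ stdLat K m,
      (LaurentPolynomial.T ((s : ℤ) + 1) : LaurentPolynomial K) • nab v ∈ stdLat K m)
    (hrad : ∀ (k : ℕ), ∀ P ∈ OpF K m nab k, ∀ t : ℕ, 1 ≤ t →
      (∀ j : ℤ, ∀ v ∈ latFilt K m nab j, (P ^ t) v ∈ latFilt K m nab (j + k * t - 1)) →
      (∀ j : ℤ, ∀ v ∈ latFilt K m nab j, P v ∈ latFilt K m nab (j + k - 1))) :
    ∃ L' : Submodule K (Fin m → LaurentPolynomial K),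
      (∃ S : Finset (Fin m → LaurentPolynomial K), L' = Submodule.span K
        {v | ∃ t ∈ S, ∃ k : ℕ, v = (LaurentPolynomial.T (k : ℤ) : LaurentPolynomial K) • t}) ∧
      Submodule.span (LaurentPolynomial K) (L' : Set (Fin m → LaurentPolynomial K)) = ⊤ ∧
      ∀ v ∈ L', (LaurentPolynomial.T 1 : LaurentPolynomial K) • nab v ∈ L' := by
  refine ⟨stdLat K m, exists_finset_stdLat_eq_span, span_stdLat_eq_top, fun v hv => ?_⟩
  have hx : ∀ j : ℤ, ∀ v ∈ latFilt K m nab j,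
      ((T 1 : K[T;T⁻¹]) • nab) v ∈ latFilt K m nab (j + (1 : ℕ) - 1) :=
    hrad 1 _ (by simpa using T_smul_pow_mem_OpF nab 1 1) (s + 1) s.succ_pos fun j v hv => by
      convert T_one_smul_nab_pow_mem_latFilt hLeib hpole j hv using 2
      push_cast; ring
  simpa [latFilt_zero hLeib] using hx 0 v (by rwa [latFilt_zero hLeib])

/-- One-dimensional case of (Kashiwara-regular ⟹ regular connection).  Let
`A = K[x,x⁻¹]` (`char K = 0`), `E = A^m` free with connection `nab` whose matrix has poles
of order `≤ s+1` at `0` (i.e. `x^{s+1}∂` preserves the standard lattice `L`).  Suppose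
that the annihilator of `Gr_F E`, for the good filtration `F^i = D_i·L`, is a radical
ideal (elementwise: if the symbol of the `ks`-th power of an operator of order `k`
annihilates `Gr_F E`, so does the symbol of the operator).  Then the connection is
regular at `0`: there is a finitely generated `K[x]`-lattice `L'` generating `E` over `A`
and stable under `x∂`. -/
theorem regular_connection_of_radical_annihilator
    (K : Type*) [Field K] [CharZero K] (m : ℕ)
    (nab : (Fin m → LaurentPolynomial K) →ₗ[K] (Fin m → LaurentPolynomial K))
    (hLeib : ∀ (a : LaurentPolynomial K) (v : Fin m → LaurentPolynomial K),
      nab (a • v) = lder K a • v + a • nab v)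
    (s : ℕ)
    (hpole : ∀ v ∈ stdLat K m,
      (LaurentPolynomial.T ((s : ℤ) + 1) : LaurentPolynomial K) • nab v ∈ stdLat K m)
    (hrad : ∀ (k : ℕ), ∀ P ∈ OpF K m nab k, ∀ t : ℕ, 1 ≤ t →
      (∀ j : ℤ, ∀ v ∈ latFilt K m nab j, (P ^ t) v ∈ latFilt K m nab (j + k * t - 1)) →
      (∀ j : ℤ, ∀ v ∈ latFilt K m nab j, P v ∈ latFilt K m nab (j + k - 1))) :
    ∃ L' : Submodule K (Fin m → LaurentPolynomial K),
      (∃ S : Finset (Fin m → LaurentPolynomial K), L' = Submodule.span K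
        {v | ∃ t ∈ S, ∃ k : ℕ, v = (LaurentPolynomial.T (k : ℤ) : LaurentPolynomial K) • t}) ∧
      Submodule.span (LaurentPolynomial K) (L' : Set (Fin m → LaurentPolynomial K)) = ⊤ ∧
      ∀ v ∈ L', (LaurentPolynomial.T 1 : LaurentPolynomial K) • nab v ∈ L' :=
  regular_connection_of_radical_annihilator_general K m nab hLeib s hpole hrad
end

section
/- Let A be a commutative Noetherian ring, M an A-module, and F, G two exhaustive increasing filtrations of M by finitely generated A-submodules that are both good with respect to a filtered ring R acting on M (with Gr(R) commutative Noetherian). Then F and G are commensurable: there exists k ≥ 0 such that F^{i−k}M ⊆ G^i M ⊆ F^{i+k}M for all i. -/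
/-!
A good filtration `F` is generated by finitely many symbols `(d, m)`. Each such `m`
lies in some `G^n` by exhaustiveness, so once `k ≥ n - d` for all of the finitely many symbols,
compatibility of `G` with the filtration of `R` gives `F^j ⊆ G^{j+k}` for every `j`. Exchanging
the roles of `F` and `G` gives the other inclusion.
-/

open Filter

section GeneratedFiltration

variable {R M : Type*} [Ring R] [AddCommGroup M] [Module R M] (FR : ℤ → AddSubgroup R)

/-- The filtration of `M` generated by symbols `(d, m) ∈ T`, the symbol `(d, m)` placing `m`
in degree `d`. -/
def generatedFiltration (T : Finset (ℤ × M)) (j : ℤ) : AddSubgroup M :=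
  AddSubgroup.closure {y | ∃ p ∈ T, ∃ w ∈ FR (j - p.1), y = w • p.2}

variable {FR}

theorem generatedFiltration_le {G : ℤ → AddSubgroup M}
    (hGcomp : ∀ i j : ℤ, ∀ w ∈ FR i, ∀ m ∈ G j, w • m ∈ G (i + j))
    {T : Finset (ℤ × M)} {k : ℤ} (hT : ∀ p ∈ T, p.2 ∈ G (p.1 + k)) (j : ℤ) :
    generatedFiltration FR T j ≤ G (j + k) := by
  rw [generatedFiltration, AddSubgroup.closure_le]
  rintro y ⟨p, hp, w, hw, rfl⟩
  have hmem := hGcomp _ _ w hw p.2 (hT p hp)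
  rwa [← add_assoc, sub_add_cancel] at hmem

variable {A : Type*} [Ring A] [Module A M] {G : ℤ → Submodule A M}

theorem eventually_forall_mem_add (hGmono : Monotone G) (hGexh : ∀ m : M, ∃ j, m ∈ G j)
    (T : Finset (ℤ × M)) : ∀ᶠ k in atTop, ∀ p ∈ T, p.2 ∈ G (p.1 + k) := by
  refine (eventually_all_finset T).2 fun p _ => ?_
  obtain ⟨n, hn⟩ := hGexh p.2
  filter_upwards [eventually_ge_atTop (n - p.1)] with k hk
  exact hGmono (by omega) hn

theorem eventually_le_comp_add_of_eq_generatedFiltration {F : ℤ → Submodule A M}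
    (hGmono : Monotone G) (hGexh : ∀ m : M, ∃ j, m ∈ G j)
    (hGcomp : ∀ i j : ℤ, ∀ w ∈ FR i, ∀ m ∈ G j, w • m ∈ G (i + j))
    {T : Finset (ℤ × M)} (hF : ∀ j, (F j : Set M) = generatedFiltration FR T j) :
    ∀ᶠ k in atTop, ∀ j, F j ≤ G (j + k) := by
  filter_upwards [eventually_forall_mem_add hGmono hGexh T] with k hk j
  rw [← SetLike.coe_subset_coe, hF j]
  exact generatedFiltration_le (G := fun j => (G j).toAddSubgroup) hGcomp hk j

end GeneratedFiltration

theorem good_filtrations_commensurable_general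
    (A : Type*) [CommRing A]
    (R : Type*) [Ring R]
    (FR : ℤ → AddSubgroup R)
    (M : Type*) [AddCommGroup M] [Module R M] [Module A M]
    (F G : ℤ → Submodule A M)
    (hFmono : Monotone F) (hGmono : Monotone G)
    (hFexh : ∀ m : M, ∃ j, m ∈ F j) (hGexh : ∀ m : M, ∃ j, m ∈ G j)
    (hFcomp : ∀ i j : ℤ, ∀ w ∈ FR i, ∀ m ∈ F j, w • m ∈ F (i + j))
    (hGcomp : ∀ i j : ℤ, ∀ w ∈ FR i, ∀ m ∈ G j, w • m ∈ G (i + j))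
    (hFgood : ∃ T : Finset (ℤ × M), (∀ p ∈ T, p.2 ∈ F p.1) ∧
      ∀ j : ℤ, (F j : Set M) =
        ↑(AddSubgroup.closure {y | ∃ p ∈ T, ∃ w ∈ FR (j - p.1), y = w • p.2}))
    (hGgood : ∃ T : Finset (ℤ × M), (∀ p ∈ T, p.2 ∈ G p.1) ∧
      ∀ j : ℤ, (G j : Set M) =
        ↑(AddSubgroup.closure {y | ∃ p ∈ T, ∃ w ∈ FR (j - p.1), y = w • p.2})) :
    ∃ k : ℤ, 0 ≤ k ∧ ∀ i : ℤ, F (i - k) ≤ G i ∧ G i ≤ F (i + k) := by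
  obtain ⟨TF, -, hF⟩ := hFgood
  obtain ⟨TG, -, hG⟩ := hGgood
  have hFG := eventually_le_comp_add_of_eq_generatedFiltration hGmono hGexh hGcomp hF
  have hGF := eventually_le_comp_add_of_eq_generatedFiltration hFmono hFexh hFcomp hG
  obtain ⟨k, ⟨hFG, hGF⟩, hk⟩ := ((hFG.and hGF).and (eventually_ge_atTop 0)).exists
  refine ⟨k, hk, fun i => ⟨?_, hGF i⟩⟩
  simpa using hFG (i - k)

/-- Let `A` be a commutative Noetherian ring and `M` a module over a filtered ring `R`
(with `A ⊆ F^0 R` via `ι`, and commutative Noetherian associated graded ring), restricting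
to an `A`-module.  Let `F`, `G` be two exhaustive increasing filtrations of `M` by
finitely generated `A`-submodules which are both good (the associated graded modules are
finitely generated over `Gr R`, i.e. both are generated by finitely many homogeneous
symbols).  Then `F` and `G` are commensurable: there exists `k ≥ 0` with
`F^{i-k} M ⊆ G^i M ⊆ F^{i+k} M` for all `i`. -/
theorem good_filtrations_commensurable
    (A : Type*) [CommRing A] [IsNoetherianRing A]
    (R : Type*) [Ring R] (ι : A →+* R)
    (FR : ℤ → AddSubgroup R)
    (hmono : Monotone FR) (hone : (1 : R) ∈ FR 0)
    (hmul : ∀ i j : ℤ, ∀ a ∈ FR i, ∀ b ∈ FR j, a * b ∈ FR (i + j))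
    (hexh : ∀ w : R, ∃ i, w ∈ FR i)
    (hA : ∀ a : A, ι a ∈ FR 0)
    (hcomm : ∀ i j : ℤ, ∀ a ∈ FR i, ∀ b ∈ FR j, a * b - b * a ∈ FR (i + j - 1))
    (M : Type*) [AddCommGroup M] [Module R M] [Module A M]
    (hcompat : ∀ (a : A) (m : M), ι a • m = a • m)
    (F G : ℤ → Submodule A M)
    (hFmono : Monotone F) (hGmono : Monotone G)
    (hFexh : ∀ m : M, ∃ j, m ∈ F j) (hGexh : ∀ m : M, ∃ j, m ∈ G j)
    (hFfg : ∀ j, (F j).FG) (hGfg : ∀ j, (G j).FG)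
    (hFcomp : ∀ i j : ℤ, ∀ w ∈ FR i, ∀ m ∈ F j, w • m ∈ F (i + j))
    (hGcomp : ∀ i j : ℤ, ∀ w ∈ FR i, ∀ m ∈ G j, w • m ∈ G (i + j))
    (hFgood : ∃ T : Finset (ℤ × M), (∀ p ∈ T, p.2 ∈ F p.1) ∧
      ∀ j : ℤ, (F j : Set M) =
        ↑(AddSubgroup.closure {y | ∃ p ∈ T, ∃ w ∈ FR (j - p.1), y = w • p.2}))
    (hGgood : ∃ T : Finset (ℤ × M), (∀ p ∈ T, p.2 ∈ G p.1) ∧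
      ∀ j : ℤ, (G j : Set M) =
        ↑(AddSubgroup.closure {y | ∃ p ∈ T, ∃ w ∈ FR (j - p.1), y = w • p.2})) :
    ∃ k : ℤ, 0 ≤ k ∧ ∀ i : ℤ, F (i - k) ≤ G i ∧ G i ≤ F (i + k) :=
  good_filtrations_commensurable_general A R FR M F G hFmono hGmono hFexh hGexh hFcomp hGcomp hFgood
    hGgood
end
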